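/- arXiv:1908.03172 — 2 statements merged into one kernel-verified Lean document; each statement's English description precedes it below -/
import Mathlib

section
/- Let G be a minimally non-(3,4)-colorable graph with girth at least 5, and let C = u_1 u_2 u_3 u_4 u_5 u_6 be a 6-cycle in G such that exactly one of the vertices u_1, ..., u_6 has degree 2. Then at most one of the vertices u_1, ..., u_6 is a 5p-vertex. -/
/-- The degree of a vertex: the number of its neighbors. -/
noncomputable def degN {V : Type*} (G : SimpleGraph V) (v : V) : ℕ :=
  {w | G.Adj v w}.ncard

/-- `c` is a (3,4)-coloring of `G`: every vertex gets value 3 or 4, and every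
vertex with value `i` has at most `i` neighbors with value `i`. -/
def IsColoring34 {V : Type*} (G : SimpleGraph V) (c : V → ℕ) : Prop :=
  (∀ v, c v = 3 ∨ c v = 4) ∧ ∀ v, {w | G.Adj v w ∧ c w = c v}.ncard ≤ c v

/-- `G` is (3,4)-colorable. -/
def Colorable34 {V : Type*} (G : SimpleGraph V) : Prop :=
  ∃ c, IsColoring34 G c

/-- The graph `G − v` obtained by deleting the vertex `v` and its incident edges
(keeping `v` as an isolated vertex, which does not affect (3,4)-colorability). -/
def deleteVert {V : Type*} (G : SimpleGraph V) (v : V) : SimpleGraph V where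
  Adj a b := G.Adj a b ∧ a ≠ v ∧ b ≠ v
  symm := ⟨fun _ _ ⟨h, ha, hb⟩ => ⟨h.symm, hb, ha⟩⟩
  loopless := ⟨fun a ⟨h, _, _⟩ => G.loopless.irrefl a h⟩

/-- `G` is minimally non-(3,4)-colorable. -/
def MinNonColorable34 {V : Type*} (G : SimpleGraph V) : Prop :=
  ¬ Colorable34 G ∧ (∀ v, Colorable34 (deleteVert G v)) ∧
    ∀ e ∈ G.edgeSet, Colorable34 (G.deleteEdges {e})

/-- `u` is `i`-saturated under the coloring `c` of the graph `G`. -/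
def Saturated34 {V : Type*} (G : SimpleGraph V) (c : V → ℕ) (i : ℕ) (u : V) : Prop :=
  c u = i ∧ {w | G.Adj u w ∧ c w = i}.ncard = i

/-- `u` can be recolored: changing the color of `u` to the other color
(`7 - c u` swaps 3 and 4) again yields a (3,4)-coloring of `G`. -/
def Recolorable34 {V : Type*} [DecidableEq V] (G : SimpleGraph V) (c : V → ℕ) (u : V) : Prop :=
  IsColoring34 G (Function.update c u (7 - c u))

/-- The number of 3^+-neighbors of `x` in `G` (neighbors of degree at least 3). -/
noncomputable def tpn {V : Type*} (G : SimpleGraph V) (x : V) : ℕ :=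
  {w | G.Adj x w ∧ 3 ≤ degN G w}.ncard

/-- A 5p-vertex (poor 5-vertex): degree 5 with exactly one 3^+-neighbor. -/
def Is5p {V : Type*} (G : SimpleGraph V) (x : V) : Prop := degN G x = 5 ∧ tpn G x = 1

/-- A 5s-vertex (semi-poor 5-vertex): degree 5 with exactly two 3^+-neighbors. -/
def Is5s {V : Type*} (G : SimpleGraph V) (x : V) : Prop := degN G x = 5 ∧ tpn G x = 2

/-- A 6p-vertex (poor 6-vertex): degree 6 with exactly one 3^+-neighbor. -/
def Is6p {V : Type*} (G : SimpleGraph V) (x : V) : Prop := degN G x = 6 ∧ tpn G x = 1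

/-- `G` has girth at least 5: no 3-cycles and no 4-cycles. -/
def GirthAtLeast5 {V : Type*} (G : SimpleGraph V) : Prop :=
  (∀ a b c : V, G.Adj a b → G.Adj b c → ¬ G.Adj c a) ∧
  (∀ a b c d : V, a ≠ c → b ≠ d →
    G.Adj a b → G.Adj b c → G.Adj c d → ¬ G.Adj d a)

/-! Let `d` be the unique degree-2 vertex of the cycle. Every cycle vertex has degree at least 2,
so a 5p-vertex on the cycle, having only one 3^+-neighbour, has `d` as a cycle neighbour; two
5p-vertices `p`, `q` would thus be the two neighbours of `d`. By minimality `G - dp` has a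
(3,4)-coloring, which we turn into one of `G`. If `d` and `p` get different colors there is nothing
to do. If both are 3, recolor `d` to 4, after first recoloring `q` to 3 when `q` is 4-saturated
(its fifth neighbour is `d`, colored 3). If both are 4, either the coloring already works for `G`
or all five neighbours of `p` are colored 4, and `p` can be recolored 3. -/

section Coloring34

variable {V : Type*} {G H : SimpleGraph V} {c : V → ℕ}

lemma setOf_deleteEdges_adj_and_color_eq {v p w : V} (h : w ≠ v ∧ w ≠ p ∨ c v ≠ c p) :
    {x | (G.deleteEdges {s(v, p)}).Adj w x ∧ c x = c w} = {x | G.Adj w x ∧ c x = c w} := by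
  ext x
  simp only [Set.mem_ofPred_eq, SimpleGraph.deleteEdges_adj, Set.mem_singleton_iff, Sym2.eq_iff]
  constructor
  · exact fun ⟨⟨hadj, _⟩, hcx⟩ => ⟨hadj, hcx⟩
  · rintro ⟨hadj, hcx⟩
    refine ⟨⟨hadj, ?_⟩, hcx⟩
    rintro (⟨rfl, rfl⟩ | ⟨rfl, rfl⟩) <;> simp_all [eq_comm]

lemma IsColoring34.of_deleteEdges {v p : V} (hc : IsColoring34 (G.deleteEdges {s(v, p)}) c)
    (hv : {x | G.Adj v x ∧ c x = c v}.ncard ≤ c v)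
    (hp : {x | G.Adj p x ∧ c x = c p}.ncard ≤ c p) :
    IsColoring34 G c := by
  refine ⟨hc.1, fun w => ?_⟩
  by_cases hwv : w = v
  · exact hwv ▸ hv
  by_cases hwp : w = p
  · exact hwp ▸ hp
  rw [← setOf_deleteEdges_adj_and_color_eq (Or.inl ⟨hwv, hwp⟩)]
  exact hc.2 w

lemma IsColoring34.of_deleteEdges_of_ne {v p : V}
    (hc : IsColoring34 (G.deleteEdges {s(v, p)}) c) (hne : c v ≠ c p) : IsColoring34 G c := by
  refine ⟨hc.1, fun w => ?_⟩
  rw [← setOf_deleteEdges_adj_and_color_eq (Or.inr hne)]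
  exact hc.2 w

variable [Finite V]

lemma ncard_adj_and_le_degN (hHG : H ≤ G) (w : V) (P : V → Prop) :
    {x | H.Adj w x ∧ P x}.ncard ≤ degN G w :=
  Set.ncard_le_ncard (fun _ hx => hHG hx.1) (Set.toFinite _)

lemma ncard_adj_color_add_ncard_adj_color_le_degN (hHG : H ≤ G) (w : V) {i j : ℕ}
    (hij : i ≠ j) :
    {x | H.Adj w x ∧ c x = i}.ncard + {x | H.Adj w x ∧ c x = j}.ncard ≤ degN G w := by
  rw [← Set.ncard_union_eq]
  · exact Set.ncard_le_ncard (by rintro x (hx | hx) <;> exact hHG hx.1) (Set.toFinite _)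
  · exact Set.disjoint_left.2 fun x hi hj => hij (hi.2.symm.trans hj.2)

lemma two_le_degN_of_adj {x a b : V} (ha : G.Adj x a) (hb : G.Adj x b) (hab : a ≠ b) :
    2 ≤ degN G x :=
  (Set.one_lt_ncard_iff (Set.toFinite _)).2 ⟨a, b, ha, hb, hab⟩

lemma degN_lt_three_or_degN_lt_three_of_tpn_le_one {x a b : V} (hx : tpn G x ≤ 1)
    (ha : G.Adj x a) (hb : G.Adj x b) (hab : a ≠ b) : degN G a < 3 ∨ degN G b < 3 := by
  by_contra! h
  have : 1 < tpn G x :=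
    (Set.one_lt_ncard_iff (Set.toFinite _)).2 ⟨a, b, ⟨ha, h.1⟩, ⟨hb, h.2⟩, hab⟩
  omega

lemma eq_or_eq_of_adj_of_degN_eq_two {v p q x : V} (hv : degN G v = 2) (hp : G.Adj v p)
    (hq : G.Adj v q) (hpq : p ≠ q) (hx : G.Adj v x) : x = p ∨ x = q := by
  have hN : {p, q} = {w | G.Adj v w} :=
    Set.eq_of_subset_of_ncard_le (by simp [Set.insert_subset_iff, hp, hq])
      (by rw [Set.ncard_pair hpq]; exact hv.le) (Set.toFinite _)
  have hx' : x ∈ {w | G.Adj v w} := hx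
  rw [← hN] at hx'
  simpa using hx'

lemma IsColoring34.update [DecidableEq V] (hc : IsColoring34 H c) {u : V} {k : ℕ}
    (hk : k = 3 ∨ k = 4) (hu : {x | H.Adj u x ∧ c x = k}.ncard ≤ k)
    (hsat : ∀ w, H.Adj u w → ¬ Saturated34 H c k w) :
    IsColoring34 H (Function.update c u k) := by
  refine ⟨fun w => ?_, fun w => ?_⟩
  · rcases eq_or_ne w u with rfl | hwu
    · simpa using hk
    · simpa [hwu] using hc.1 w
  rcases eq_or_ne w u with rfl | hwu
  · have : {x | H.Adj w x ∧ Function.update c w k x = k} = {x | H.Adj w x ∧ c x = k} := by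
      ext x
      simp +contextual [Function.update_of_ne (H.ne_of_adj _).symm]
    simpa [this] using hu
  simp only [Function.update_of_ne hwu]
  by_cases hwu' : H.Adj w u ∧ c w = k
  · have hlt : {x | H.Adj w x ∧ c x = c w}.ncard < c w := by
      have := hc.2 w
      have := hsat w hwu'.1.symm
      rw [Saturated34, ← hwu'.2] at *
      omega
    calc {x | H.Adj w x ∧ Function.update c u k x = c w}.ncard
        ≤ (insert u {x | H.Adj w x ∧ c x = c w}).ncard := by
          refine Set.ncard_le_ncard (fun x hx => ?_) (Set.toFinite _)
          rcases eq_or_ne x u with rfl | hxu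
          · exact Set.mem_insert _ _
          · exact Set.mem_insert_of_mem _ (by simpa [hxu] using hx)
      _ ≤ c w := (Set.ncard_insert_le _ _).trans hlt
  · refine (Set.ncard_le_ncard (fun x hx => ?_) (Set.toFinite _)).trans (hc.2 w)
    rcases eq_or_ne x u with rfl | hxu
    · simp only [Set.mem_ofPred_eq, Function.update_self] at hx
      exact absurd ⟨hx.1, hx.2.symm⟩ hwu'
    · simpa [hxu] using hx

lemma IsColoring34.update_three_of_saturated [DecidableEq V] (hHG : H ≤ G)
    (hc : IsColoring34 H c) {q v : V} (hsat : Saturated34 H c 4 q) (hq : degN G q ≤ 5)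
    (hqv : H.Adj q v) (hcv : c v = 3) (hv : degN G v ≤ 2) :
    IsColoring34 H (Function.update c q 3) := by
  have hq3 : {x | H.Adj q x ∧ c x = 3}.ncard ≤ 1 := by
    have := ncard_adj_color_add_ncard_adj_color_le_degN (c := c) hHG q (show 4 ≠ 3 by omega)
    have := hsat.2
    omega
  refine hc.update (Or.inl rfl) (hq3.trans (by omega)) fun w hw hwsat => ?_
  obtain rfl : w = v :=
    (Set.ncard_le_one_iff (Set.toFinite _)).1 hq3 ⟨hw, hwsat.1⟩ ⟨hqv, hcv⟩
  have := ncard_adj_and_le_degN hHG w (c · = 3)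
  have := hwsat.2
  omega

section DegreeTwo

variable {v p q : V}

lemma Colorable34.of_deleteEdges_of_color_eq_three (hv : degN G v = 2) (hvp : G.Adj v p)
    (hvq : G.Adj v q) (hpq : p ≠ q) (hq : degN G q ≤ 5)
    (hc : IsColoring34 (G.deleteEdges {s(v, p)}) c) (hcv : c v = 3) (hcp : c p = 3) :
    Colorable34 G := by
  classical
  set H := G.deleteEdges {s(v, p)} with hH
  have hHG : H ≤ G := G.deleteEdges_le _
  have hHv : ∀ x, H.Adj v x → x = q := fun x hx => by
    simp only [hH, SimpleGraph.deleteEdges_adj, Set.mem_singleton_iff] at hx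
    exact (eq_or_eq_of_adj_of_degN_eq_two hv hvp hvq hpq hx.1).resolve_left
      (by rintro rfl; simp at hx)
  obtain ⟨c₁, hc₁, hc₁p, hq₁⟩ :
      ∃ c₁, IsColoring34 H c₁ ∧ c₁ p = 3 ∧ ¬ Saturated34 H c₁ 4 q := by
    by_cases hsat : Saturated34 H c 4 q
    · have hqv : H.Adj q v := by
        simp [hH, hvq.symm, (G.ne_of_adj hvq).symm, hpq.symm]
      exact ⟨_, hc.update_three_of_saturated hHG hsat hq hqv hcv hv.le, by simp [hpq, hcp],
        by simp [Saturated34]⟩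
    · exact ⟨c, hc, hcp, hsat⟩
  refine ⟨Function.update c₁ v 4, (hc₁.update (Or.inr rfl) ?_ ?_).of_deleteEdges_of_ne ?_⟩
  · exact (ncard_adj_and_le_degN hHG v _).trans (by omega)
  · exact fun w hw => hHv w hw ▸ hq₁
  · simp [hc₁p, (G.ne_of_adj hvp).symm]

lemma Colorable34.of_deleteEdges_of_color_eq_four (hv : degN G v ≤ 4) (hvp : G.Adj v p)
    (hp : degN G p ≤ 5) (hc : IsColoring34 (G.deleteEdges {s(v, p)}) c) (hcv : c v = 4)
    (hcp : c p = 4) : Colorable34 G := by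
  classical
  by_cases hpG : {x | G.Adj p x ∧ c x = c p}.ncard ≤ c p
  · exact ⟨c, hc.of_deleteEdges ((ncard_adj_and_le_degN le_rfl v _).trans (by omega)) hpG⟩
  have hp3 : {x | G.Adj p x ∧ c x = 3} = ∅ := by
    have :=
      ncard_adj_color_add_ncard_adj_color_le_degN (c := c) (le_refl G) p (show 4 ≠ 3 by omega)
    rw [hcp] at hpG
    exact (Set.ncard_eq_zero (Set.toFinite _)).1 (by omega)
  have hHG : G.deleteEdges {s(v, p)} ≤ G := G.deleteEdges_le _
  refine ⟨Function.update c p 3, (hc.update (Or.inl rfl) ?_ ?_).of_deleteEdges_of_ne ?_⟩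
  · exact (Set.ncard_le_ncard (t := {x | G.Adj p x ∧ c x = 3}) (fun x hx => ⟨hHG hx.1, hx.2⟩)
      (Set.toFinite _)).trans (by simp [hp3])
  · exact fun w hw hwsat => (Set.eq_empty_iff_forall_notMem.1 hp3) w ⟨hHG hw, hwsat.1⟩
  · simp [hcv, G.ne_of_adj hvp]

theorem Colorable34.of_deleteEdges_of_degN_eq_two (hv : degN G v = 2) (hvp : G.Adj v p)
    (hvq : G.Adj v q) (hpq : p ≠ q) (hp : degN G p ≤ 5) (hq : degN G q ≤ 5)
    (h : Colorable34 (G.deleteEdges {s(v, p)})) : Colorable34 G := by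
  obtain ⟨c, hc⟩ := h
  by_cases hne : c v = c p
  · rcases hc.1 p with hcp | hcp
    · exact of_deleteEdges_of_color_eq_three hv hvp hvq hpq hq hc (hne.trans hcp) hcp
    · exact of_deleteEdges_of_color_eq_four (by omega) hvp hp hc (hne.trans hcp) hcp
  · exact ⟨c, hc.of_deleteEdges_of_ne hne⟩

end DegreeTwo

lemma adj_of_tpn_le_one {S : Set V} {d x : V}
    (hS : ∀ y ∈ S, ∃ a ∈ S, ∃ b ∈ S, a ≠ b ∧ G.Adj y a ∧ G.Adj y b)
    (hd : ∀ y ∈ S, degN G y = 2 → y = d) (hx : x ∈ S) (hx1 : tpn G x ≤ 1) :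
    G.Adj x d := by
  have two_le : ∀ y ∈ S, 2 ≤ degN G y := fun y hy =>
    let ⟨_, _, _, _, hab, hya, hyb⟩ := hS y hy
    two_le_degN_of_adj hya hyb hab
  obtain ⟨a, ha, b, hb, hab, hxa, hxb⟩ := hS x hx
  rcases degN_lt_three_or_degN_lt_three_of_tpn_le_one hx1 hxa hxb hab with h | h
  · exact hd a ha (by have := two_le a ha; omega) ▸ hxa
  · exact hd b hb (by have := two_le b hb; omega) ▸ hxb

end Coloring34

theorem stmt_13_general {V : Type*} [Fintype V] (G : SimpleGraph V)
    (hG : MinNonColorable34 G)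
    (u1 u2 u3 u4 u5 u6 : V)
    (hnd : ([u1, u2, u3, u4, u5, u6] : List V).Nodup)
    (a12 : G.Adj u1 u2) (a23 : G.Adj u2 u3) (a34 : G.Adj u3 u4)
    (a45 : G.Adj u4 u5) (a56 : G.Adj u5 u6) (a61 : G.Adj u6 u1)
    (h2 : {x ∈ ({u1, u2, u3, u4, u5, u6} : Set V) | degN G x = 2}.ncard = 1) :
    {x ∈ ({u1, u2, u3, u4, u5, u6} : Set V) | Is5p G x}.ncard ≤ 1 := by
  set S : Set V := {u1, u2, u3, u4, u5, u6}
  have hnbrs : ∀ x ∈ S, ∃ a ∈ S, ∃ b ∈ S, a ≠ b ∧ G.Adj x a ∧ G.Adj x b := by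
    simp only [List.nodup_cons, List.mem_cons, List.not_mem_nil, or_false, not_or,
      List.nodup_nil, and_true] at hnd
    rintro x (hx | hx | hx | hx | hx | hx) <;> subst x
    exacts [⟨u2, by simp [S], u6, by simp [S], by tauto, a12, a61.symm⟩,
      ⟨u3, by simp [S], u1, by simp [S], by tauto, a23, a12.symm⟩,
      ⟨u4, by simp [S], u2, by simp [S], by tauto, a34, a23.symm⟩,
      ⟨u5, by simp [S], u3, by simp [S], by tauto, a45, a34.symm⟩,
      ⟨u6, by simp [S], u4, by simp [S], by tauto, a56, a45.symm⟩,
      ⟨u1, by simp [S], u5, by simp [S], by tauto, a61, a56.symm⟩]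
  obtain ⟨d, hd⟩ := Set.ncard_eq_one.mp h2
  have hd_deg : degN G d = 2 := ((Set.ext_iff.1 hd d).2 rfl).2
  have hd_unique : ∀ x ∈ S, degN G x = 2 → x = d := fun x hx h =>
    (Set.ext_iff.1 hd x).1 ⟨hx, h⟩
  have hadj_d : ∀ x ∈ S, Is5p G x → G.Adj x d := fun x hx h5 =>
    adj_of_tpn_le_one hnbrs hd_unique hx h5.2.le
  rw [Set.ncard_le_one_iff (Set.toFinite _)]
  rintro p q ⟨hpS, hp⟩ ⟨hqS, hq⟩
  by_contra hpq
  have hdp := (hadj_d p hpS hp).symm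
  exact hG.1 (.of_deleteEdges_of_degN_eq_two hd_deg hdp (hadj_d q hqS hq).symm hpq
    hp.1.le hq.1.le (hG.2.2 _ hdp))

/-- In a minimally non-(3,4)-colorable graph of girth at least 5, if
exactly one vertex of a 6-cycle has degree 2, then at most one of its vertices is
a 5p-vertex. -/
theorem stmt_13 {V : Type*} [Fintype V] (G : SimpleGraph V)
    (hG : MinNonColorable34 G) (hgirth : GirthAtLeast5 G)
    (u1 u2 u3 u4 u5 u6 : V)
    (hnd : ([u1, u2, u3, u4, u5, u6] : List V).Nodup)
    (a12 : G.Adj u1 u2) (a23 : G.Adj u2 u3) (a34 : G.Adj u3 u4)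
    (a45 : G.Adj u4 u5) (a56 : G.Adj u5 u6) (a61 : G.Adj u6 u1)
    (h2 : {x ∈ ({u1, u2, u3, u4, u5, u6} : Set V) | degN G x = 2}.ncard = 1) :
    {x ∈ ({u1, u2, u3, u4, u5, u6} : Set V) | Is5p G x}.ncard ≤ 1 :=
  stmt_13_general G hG u1 u2 u3 u4 u5 u6 hnd a12 a23 a34 a45 a56 a61 h2
end

section
/- Let G be a minimally non-(3,4)-colorable graph with girth at least 5, and let C = u_1 u_2 u_3 u_4 u_5 u_6 be a 6-cycle in G such that exactly one of the vertices u_1, ..., u_6 has degree 2 and exactly one of them is a 5p-vertex. Then at most two of the vertices u_1, ..., u_6 are 5s-vertices or 6p-vertices. -/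
/-!
Let `u1` be the `2`-vertex of the hexagon. The `5p`-vertex has only one `3⁺`-neighbor, so it is
adjacent to `u1`; after a rotation or reflection of the hexagon it is `u2`.
By minimality `G - u1` has (3,4)-colorings and none of them extends to `u1`, so each of them
gives `u2` and `u6` different colors and saturates both. Hence no recoloring of `G - u1` can give
`u2` and `u6` equal colors, and the proof only exhibits such recolorings, obtained by swapping the
colors 3 and 4 on a few vertices. Flipping `u2` shows that `u2` has color 3 and that its only
`3⁺`-neighbor `u3` is saturated in color 4; a `5s`-vertex `u3` would then allow a Kempe swap on
the edge `u2u3`. If `u4, u5, u6` were all `5s`- or `6p`-vertices, `u4` and `u5` would be `5s`,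
`u6` would be `6p` (a `5s`-vertex `u6` can be flipped), and flipping `u5u6`, or else the path
`u4u5u6`, would succeed.
-/

section Degrees

variable {V : Type*} {G H : SimpleGraph V}

lemma deleteVert_le (G : SimpleGraph V) (u : V) : deleteVert G u ≤ G := fun _ _ h => h.1

lemma degN_deleteVert_of_not_adj {u v : V} (hv : v ≠ u) (h : ¬ G.Adj v u) :
    degN (deleteVert G u) v = degN G v := by
  unfold degN
  congr 1
  ext w
  exact ⟨fun hw => hw.1, fun hw => ⟨hw, hv, fun hwu => h (hwu ▸ hw)⟩⟩

variable [Finite V]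

lemma ncard_le_degN {v : V} {S : Set V} (hS : S ⊆ {w | G.Adj v w}) : S.ncard ≤ degN G v :=
  Set.ncard_le_ncard hS (Set.toFinite _)

lemma degN_le_of_le (h : H ≤ G) (v : V) : degN H v ≤ degN G v :=
  ncard_le_degN fun _ hw => h hw

lemma degN_deleteVert_of_adj {u v : V} (h : G.Adj v u) :
    degN (deleteVert G u) v + 1 = degN G v := by
  have heq : {w | (deleteVert G u).Adj v w} = {w | G.Adj v w} \ {u} := by
    ext w
    simp only [deleteVert, Set.mem_ofPred_eq, Set.mem_sdiff, Set.mem_singleton_iff]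
    exact ⟨fun ⟨hw, _, hwu⟩ => ⟨hw, hwu⟩, fun ⟨hw, hwu⟩ => ⟨hw, G.ne_of_adj h, hwu⟩⟩
  rw [degN, heq, Set.ncard_sdiff_singleton_add_one (show u ∈ {w | G.Adj v w} from h)
    (Set.toFinite _), degN]

lemma eq_or_eq_of_degN_eq_two {u x y w : V} (hu : degN G u = 2) (hx : G.Adj u x)
    (hy : G.Adj u y) (hxy : x ≠ y) (hw : G.Adj u w) : w = x ∨ w = y := by
  have hsub : ({x, y} : Set V) ⊆ {w | G.Adj u w} := by
    rintro w (rfl | rfl) <;> assumption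
  have heq := Set.eq_of_subset_of_ncard_le hsub
    (by rw [Set.ncard_pair hxy]; exact hu.le) (Set.toFinite _)
  have : w ∈ ({x, y} : Set V) := heq ▸ hw
  simpa using this

lemma ncard_le_tpn {v : V} {S : Set V} (hS : S ⊆ {w | G.Adj v w ∧ 3 ≤ degN G w}) :
    S.ncard ≤ tpn G v :=
  Set.ncard_le_ncard hS (Set.toFinite _)

lemma degN_le_two_of_tpn_le (hHG : H ≤ G) {v w : V} {S : Set V}
    (hS : S ⊆ {w | G.Adj v w ∧ 3 ≤ degN G w}) (htpn : tpn G v ≤ S.ncard) (hw : H.Adj v w)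
    (hwS : w ∉ S) : degN H w ≤ 2 := by
  refine (degN_le_of_le hHG w).trans (not_lt.mp fun h => ?_)
  have := ncard_le_tpn (Set.insert_subset ⟨hHG hw, h⟩ hS)
  rw [Set.ncard_insert_of_notMem hwS (Set.toFinite _)] at this
  omega

lemma is5s_of_is5s_or_is6p {v a b : V} (hv : Is5s G v ∨ Is6p G v) (hab : a ≠ b)
    (ha : G.Adj v a) (hb : G.Adj v b) (hdega : 3 ≤ degN G a) (hdegb : 3 ≤ degN G b) :
    Is5s G v := by
  have := ncard_le_tpn (G := G) (v := v) (S := {a, b})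
    (by rintro w (rfl | rfl); exacts [⟨ha, hdega⟩, ⟨hb, hdegb⟩])
  rw [Set.ncard_pair hab] at this
  exact hv.resolve_right fun h => by have := h.2; omega

end Degrees

open Classical in
noncomputable def flipOn {V : Type*} (c : V → ℕ) (F : Set V) : V → ℕ :=
  fun v => if v ∈ F then 7 - c v else c v

section Flip

variable {V : Type*} {H : SimpleGraph V} {c : V → ℕ}

lemma flipOn_of_mem {F : Set V} {v : V} (hv : v ∈ F) : flipOn c F v = 7 - c v := by
  simp [flipOn, hv]

lemma flipOn_of_notMem {F : Set V} {v : V} (hv : v ∉ F) : flipOn c F v = c v := by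
  simp [flipOn, hv]

variable [Finite V]

lemma ncard_adj_add_ncard_adj_le (hc : IsColoring34 H c) (x : V) :
    {w | H.Adj x w ∧ c w = 7 - c x}.ncard + {w | H.Adj x w ∧ c w = c x}.ncard ≤ degN H x := by
  have := hc.1 x
  rw [← Set.ncard_union_eq ?_ (Set.toFinite _) (Set.toFinite _)]
  · exact ncard_le_degN (by rintro w (hw | hw) <;> exact hw.1)
  · exact Set.disjoint_left.mpr fun w hw hw' => by have := hw.2.symm.trans hw'.2; omega

lemma isColoring34_flipOn (hc : IsColoring34 H c) {F : Set V}
    (hF : ∀ v ∈ F, {w | H.Adj v w ∧ flipOn c F w = 7 - c v}.ncard ≤ 7 - c v)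
    (hout : ∀ v ∉ F, ∀ w ∈ F, H.Adj v w → c w ≠ c v →
      degN H v ≤ 2 ∨ ((∀ x ∈ F, H.Adj v x → x = w) ∧ {x | H.Adj v x ∧ c x = c v}.ncard < c v)) :
    IsColoring34 H (flipOn c F) := by
  refine ⟨fun v => ?_, fun v => ?_⟩
  · by_cases hv : v ∈ F
    · rw [flipOn_of_mem hv]; rcases hc.1 v with h | h <;> omega
    · rw [flipOn_of_notMem hv]; exact hc.1 v
  by_cases hv : v ∈ F
  · rw [flipOn_of_mem hv]; exact hF v hv
  rw [flipOn_of_notMem hv]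
  have hcv := hc.1 v
  have hold : ∀ x ∉ F, H.Adj v x → flipOn c F x = c v → x ∈ {x | H.Adj v x ∧ c x = c v} :=
    fun x hx hadj hcol => ⟨hadj, by rwa [flipOn_of_notMem hx] at hcol⟩
  by_cases hgain : ∃ w ∈ F, H.Adj v w ∧ c w ≠ c v
  · obtain ⟨w, hwF, hadj, hcw⟩ := hgain
    rcases hout v hv w hwF hadj hcw with hdeg | ⟨huniq, hslack⟩
    · have := ncard_le_degN (G := H) (v := v) (S := {x | H.Adj v x ∧ flipOn c F x = c v})
        fun _ hx => hx.1
      omega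
    · have hsub : {x | H.Adj v x ∧ flipOn c F x = c v} ⊆
          insert w {x | H.Adj v x ∧ c x = c v} := by
        rintro x ⟨hadj', hcol⟩
        by_cases hx : x ∈ F
        · exact Or.inl (huniq x hx hadj')
        · exact Or.inr (hold x hx hadj' hcol)
      have := (Set.ncard_le_ncard hsub (Set.toFinite _)).trans (Set.ncard_insert_le _ _)
      omega
  · push Not at hgain
    refine (Set.ncard_le_ncard (fun x hx => ?_) (Set.toFinite _)).trans (hc.2 v)
    obtain ⟨hadj, hcol⟩ := hx
    by_cases hxF : x ∈ F
    · rw [flipOn_of_mem hxF] at hcol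
      have := hgain x hxF hadj
      have := hc.1 x
      omega
    · exact hold x hxF hadj hcol

lemma isColoring34_flipOn_singleton (hc : IsColoring34 H c) {x : V}
    (hx : {w | H.Adj x w ∧ c w = 7 - c x}.ncard ≤ 7 - c x)
    (hnbr : ∀ w, H.Adj x w → c w ≠ c x →
      degN H w ≤ 2 ∨ {v | H.Adj w v ∧ c v = c w}.ncard < c w) :
    IsColoring34 H (flipOn c {x}) := by
  refine isColoring34_flipOn hc (fun v hv => ?_) fun v hv w hw hadj hcw => ?_
  · obtain rfl : v = x := hv
    convert hx using 4 with w
    exact and_congr_right fun hadj => by rw [flipOn_of_notMem (F := {v}) (H.ne_of_adj hadj).symm]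
  · obtain rfl : w = x := hw
    exact (hnbr v hadj.symm hcw.symm).imp_right fun h => ⟨fun y hy _ => hy, h⟩

lemma ncard_flipOn_eq_zero (hc : IsColoring34 H c) {F : Set V} {v : V}
    (hin : ∀ w ∈ F, H.Adj v w → c w ≠ c v) (hbdry : ∀ w ∉ F, H.Adj v w → c w = c v) :
    {w | H.Adj v w ∧ flipOn c F w = 7 - c v}.ncard = 0 := by
  refine (Set.ncard_eq_zero (Set.toFinite _)).mpr
    (Set.eq_empty_of_forall_notMem fun w ⟨hadj, hcol⟩ => ?_)
  have := hc.1 v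
  have := hc.1 w
  by_cases hw : w ∈ F
  · rw [flipOn_of_mem hw] at hcol
    exact hin w hw hadj (by omega)
  · rw [flipOn_of_notMem hw] at hcol
    have := hbdry w hw hadj
    omega

lemma isColoring34_flipOn_of_boundary (hc : IsColoring34 H c) {F : Set V}
    (hin : ∀ v ∈ F, ∀ w ∈ F, H.Adj v w → c w ≠ c v)
    (hbdry : ∀ v ∈ F, ∀ w ∉ F, H.Adj v w → c w = c v) :
    IsColoring34 H (flipOn c F) :=
  isColoring34_flipOn hc
    (fun v hv => (ncard_flipOn_eq_zero hc (hin v hv) (hbdry v hv)).trans_le (Nat.zero_le _))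
    fun v hv w hw hadj hcw => absurd (hbdry w hw v hv hadj.symm).symm hcw

lemma ncard_flipOn_le_of_adj (hc : IsColoring34 H c) {F : Set V} {b x : V} (hxF : x ∈ F)
    (hxb : H.Adj b x) (hbx : c b ≠ c x) (hdeg : degN H b ≤ c x + 1) :
    {w | H.Adj b w ∧ flipOn c F w = 7 - c b}.ncard ≤ 7 - c b := by
  have hsub : {w | H.Adj b w ∧ flipOn c F w = 7 - c b} ⊆ {w | H.Adj b w} \ {x} := by
    rintro w ⟨hadj, hcol⟩
    refine ⟨hadj, fun hwx => hbx ?_⟩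
    obtain rfl : w = x := hwx
    have := hc.1 w
    have := hc.1 b
    rw [flipOn_of_mem hxF] at hcol
    omega
  have := Set.ncard_sdiff_singleton_add_one (show x ∈ {w | H.Adj b w} from hxb) (Set.toFinite _)
  have := Set.ncard_le_ncard hsub (Set.toFinite _)
  have := hc.1 x
  have := hc.1 b
  unfold degN at hdeg
  omega

end Flip

section Extension

variable {V : Type*} [Finite V] {G : SimpleGraph V} {u : V} {c : V → ℕ}

lemma colorable34_of_isColoring34_deleteVert (hc : IsColoring34 (deleteVert G u) c) {j : ℕ}
    (hj : j = 3 ∨ j = 4) (hcount : {w | G.Adj u w ∧ c w = j}.ncard ≤ j)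
    (hslack : ∀ w, G.Adj u w → c w = j →
      {x | (deleteVert G u).Adj w x ∧ c x = j}.ncard < j) :
    Colorable34 G := by
  classical
  refine ⟨Function.update c u j, fun v => ?_, fun v => ?_⟩
  · rcases eq_or_ne v u with rfl | hv
    · rwa [Function.update_self]
    · rw [Function.update_of_ne hv]; exact hc.1 v
  rcases eq_or_ne v u with rfl | hv
  · rw [Function.update_self]
    convert hcount using 4 with w
    exact and_congr_right fun hw => by rw [Function.update_of_ne (G.ne_of_adj hw).symm]
  rw [Function.update_of_ne hv]
  have hsub : {w | G.Adj v w ∧ Function.update c u j w = c v} ⊆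
      insert u {x | (deleteVert G u).Adj v x ∧ c x = c v} := by
    rintro w ⟨hw, hcol⟩
    rcases eq_or_ne w u with rfl | hwu
    · exact Set.mem_insert _ _
    · rw [Function.update_of_ne hwu] at hcol
      exact Or.inr ⟨⟨hw, hv, hwu⟩, hcol⟩
  by_cases hgain : G.Adj v u ∧ c v = j
  · have := hslack v hgain.1.symm hgain.2
    rw [← hgain.2] at this
    have := (Set.ncard_le_ncard hsub (Set.toFinite _)).trans (Set.ncard_insert_le _ _)
    omega
  · refine (Set.ncard_le_ncard (fun w hw => ?_) (Set.toFinite _)).trans (hc.2 v)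
    obtain ⟨hadj, hcol⟩ := hw
    rcases hsub ⟨hadj, hcol⟩ with rfl | hw'
    · rw [Function.update_self] at hcol
      exact absurd ⟨hadj, hcol.symm⟩ hgain
    · exact hw'

variable {x y : V}

lemma ne_of_not_colorable34 (hG : ¬ Colorable34 G) (hc : IsColoring34 (deleteVert G u) c)
    (hN : ∀ w, G.Adj u w → w = x ∨ w = y) : c x ≠ c y := by
  intro hxy
  have hnone : ∀ w, G.Adj u w → c w ≠ 7 - c x := fun w hw => by
    have := hc.1 x
    rcases hN w hw with rfl | rfl <;> omega
  refine hG (colorable34_of_isColoring34_deleteVert hc (j := 7 - c x) ?_ ?_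
    fun w hw hcol => absurd hcol (hnone w hw))
  · rcases hc.1 x with h | h <;> omega
  · rw [Set.eq_empty_of_forall_notMem (s := {w | G.Adj u w ∧ c w = 7 - c x})
      fun w hw => hnone w hw.1 hw.2, Set.ncard_empty]
    exact Nat.zero_le _

lemma saturated_of_not_colorable34 (hG : ¬ Colorable34 G) (hc : IsColoring34 (deleteVert G u) c)
    (hN : ∀ w, G.Adj u w → w = x ∨ w = y) :
    {w | (deleteVert G u).Adj x w ∧ c w = c x}.ncard = c x := by
  have hxy := ne_of_not_colorable34 hG hc hN
  by_contra hsat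
  have hsub : {w | G.Adj u w ∧ c w = c x} ⊆ {x} := by
    rintro w ⟨hw, hcol⟩
    rcases hN w hw with rfl | rfl
    · rfl
    · exact absurd hcol.symm hxy
  refine hG (colorable34_of_isColoring34_deleteVert hc (hc.1 x) ?_ ?_)
  · have := (Set.ncard_le_ncard hsub (Set.toFinite _)).trans_eq (Set.ncard_singleton x)
    have := hc.1 x
    omega
  · intro w hw hcol
    rcases hN w hw with rfl | rfl
    · exact lt_of_le_of_ne (hc.2 w) hsat
    · exact absurd hcol hxy.symm

end Extension

section Separated

variable {V : Type*} {H : SimpleGraph V} {c : V → ℕ} {x y : V}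

lemma not_isColoring34_flipOn (hsep : ∀ c', IsColoring34 H c' → c' x ≠ c' y)
    (hc : IsColoring34 H c) {F : Set V} (hx : x ∈ F) (hy : y ∉ F) :
    ¬ IsColoring34 H (flipOn c F) := by
  intro hc'
  have := hsep c hc
  have := hc.1 x
  have := hc.1 y
  exact hsep _ hc' (by rw [flipOn_of_mem hx, flipOn_of_notMem hy]; omega)

variable [Finite V]

lemma forall_adj_eq_of_saturated {S : Set V}
    (hsat : {w | H.Adj x w ∧ c w = c x}.ncard = c x) (hS : ∀ w ∈ S, H.Adj x w ∧ c w ≠ c x)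
    (hdeg : degN H x ≤ c x + S.ncard) : ∀ w, H.Adj x w → w ∉ S → c w = c x := by
  have hsub : {w | H.Adj x w ∧ c w = c x} ⊆ {w | H.Adj x w} \ S :=
    fun w ⟨hw, hcol⟩ => ⟨hw, fun hwS => (hS w hwS).2 hcol⟩
  have hcard : ({w | H.Adj x w} \ S).ncard + S.ncard = degN H x :=
    Set.ncard_sdiff_add_ncard_of_subset (fun w hw => (hS w hw).1) (Set.toFinite _)
  have heq := Set.eq_of_subset_of_ncard_le hsub (by omega) (Set.toFinite _)
  intro w hw hwS
  have : w ∈ {w | H.Adj x w ∧ c w = c x} := heq ▸ ⟨hw, hwS⟩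
  exact this.2

lemma eq_three_of_saturated (hsep : ∀ c', IsColoring34 H c' → c' x ≠ c' y)
    (hc : IsColoring34 H c) (hyx : y ≠ x)
    (hsat : {w | H.Adj x w ∧ c w = c x}.ncard = c x) (hdeg : degN H x ≤ 4) : c x = 3 := by
  by_contra h3
  have h4 : c x = 4 := (hc.1 x).resolve_left h3
  have hall := forall_adj_eq_of_saturated (S := ∅) hsat (by simp) (by simp [h4, hdeg])
  refine not_isColoring34_flipOn hsep hc (F := {x}) rfl hyx
    (isColoring34_flipOn_of_boundary hc ?_ fun v hv w _ hadj => ?_)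
  · rintro v rfl w rfl hadj
    exact (H.irrefl hadj).elim
  · obtain rfl : v = x := hv
    exact hall w hadj (Set.notMem_empty w)

lemma saturated_of_forall_adj_degN_le_two (hsep : ∀ c', IsColoring34 H c' → c' x ≠ c' y)
    (hc : IsColoring34 H c) (hyx : y ≠ x) {z : V}
    (hcount : {w | H.Adj x w ∧ c w = 7 - c x}.ncard ≤ 7 - c x)
    (hlow : ∀ w, H.Adj x w → w ≠ z → degN H w ≤ 2) :
    c z ≠ c x ∧ {w | H.Adj z w ∧ c w = c z}.ncard = c z := by
  by_contra hz
  refine not_isColoring34_flipOn hsep hc (F := {x}) rfl hyx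
    (isColoring34_flipOn_singleton hc hcount fun w hw hcw => ?_)
  rcases eq_or_ne w z with rfl | hwz
  · exact Or.inr (lt_of_le_of_ne (hc.2 w) fun hsat => hz ⟨hcw, hsat⟩)
  · exact Or.inl (hlow w hw hwz)

lemma false_of_kempe_edge (hsep : ∀ c', IsColoring34 H c' → c' x ≠ c' y)
    (hc : IsColoring34 H c) {z : V} (hyx : y ≠ x) (hyz : y ≠ z) (hxz : c z ≠ c x)
    (hx : ∀ w, H.Adj x w → w ≠ z → c w = c x) (hz : ∀ w, H.Adj z w → w ≠ x → c w = c z) :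
    False := by
  refine not_isColoring34_flipOn hsep hc (F := {x, z}) (by simp) (by simp [hyx, hyz])
    (isColoring34_flipOn_of_boundary hc ?_ ?_)
  · rintro v (rfl | rfl) w (rfl | rfl) hadj
    exacts [(H.irrefl hadj).elim, hxz, hxz.symm, (H.irrefl hadj).elim]
  · rintro v (rfl | rfl) w hw hadj <;> simp only [Set.mem_insert_iff, Set.mem_singleton_iff,
      not_or] at hw
    exacts [hx w hadj hw.2, hz w hadj hw.1]

lemma saturated_of_flipOn_pair (hsep : ∀ c', IsColoring34 H c' → c' x ≠ c' y)
    (hc : IsColoring34 H c) {a b : V} (hyx : y ≠ x) (hyb : y ≠ b) (hxb : H.Adj b x)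
    (hax : ¬ H.Adj a x) (hbx : c b ≠ c x) (hx : ∀ w, H.Adj x w → w ≠ b → c w = c x)
    (hdegb : degN H b ≤ c x + 1) (hlow : ∀ w, H.Adj b w → w ≠ a → w ≠ x → degN H w ≤ 2) :
    c a = c x ∧ {w | H.Adj a w ∧ c w = c a}.ncard = c a := by
  by_contra ha
  refine not_isColoring34_flipOn hsep hc (F := {x, b}) (by simp) (by simp [hyx, hyb])
    (isColoring34_flipOn hc ?_ ?_)
  · rintro v (rfl | rfl)
    · refine (ncard_flipOn_eq_zero hc ?_ fun w hw hadj => hx w hadj ?_).trans_le (Nat.zero_le _)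
      · rintro w (rfl | rfl) hadj
        exacts [(H.irrefl hadj).elim, hbx]
      · exact fun hwb => hw (Or.inr hwb)
    · exact ncard_flipOn_le_of_adj hc (by simp) hxb hbx hdegb
  · rintro v hv w (rfl | rfl) hadj hcw <;> simp only [Set.mem_insert_iff, Set.mem_singleton_iff,
      not_or] at hv
    · exact absurd (hx v hadj.symm hv.2) hcw.symm
    rcases eq_or_ne v a with rfl | hva
    · refine Or.inr ⟨fun w hw hadj' => ?_, lt_of_le_of_ne (hc.2 v) fun hsat => ha ⟨?_, hsat⟩⟩
      · rcases hw with rfl | rfl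
        exacts [absurd hadj' hax, rfl]
      · have := hc.1 v
        have := hc.1 w
        have := hc.1 x
        omega
    · exact Or.inl (hlow v hadj.symm hva hv.1)

lemma false_of_flipOn_triple (hsep : ∀ c', IsColoring34 H c' → c' x ≠ c' y)
    (hc : IsColoring34 H c) {a b : V} (hyx : y ≠ x) (hyb : y ≠ b) (hya : y ≠ a)
    (hxb : H.Adj b x) (hax : ¬ H.Adj a x) (hbx : c b ≠ c x) (hca : c a = c x)
    (hx : ∀ w, H.Adj x w → w ≠ b → c w = c x) (ha : ∀ w, H.Adj a w → w ≠ b → c w = c a)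
    (hdegb : degN H b ≤ c x + 1) (hlow : ∀ w, H.Adj b w → w ≠ a → w ≠ x → degN H w ≤ 2) :
    False := by
  refine not_isColoring34_flipOn hsep hc (F := {x, b, a}) (by simp) (by simp [hyx, hyb, hya])
    (isColoring34_flipOn hc ?_ ?_)
  · rintro v (rfl | rfl | rfl)
    · refine (ncard_flipOn_eq_zero hc ?_ fun w hw hadj => hx w hadj ?_).trans_le (Nat.zero_le _)
      · rintro w (rfl | rfl | rfl) hadj
        exacts [(H.irrefl hadj).elim, hbx, absurd hadj.symm hax]
      · exact fun hwb => hw (Or.inr (Or.inl hwb))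
    · exact ncard_flipOn_le_of_adj hc (by simp) hxb hbx hdegb
    · refine (ncard_flipOn_eq_zero hc ?_ fun w hw hadj => ha w hadj ?_).trans_le (Nat.zero_le _)
      · rintro w (rfl | rfl | rfl) hadj
        exacts [absurd hadj hax, hca ▸ hbx, (H.irrefl hadj).elim]
      · exact fun hwb => hw (Or.inr (Or.inl hwb))
  · rintro v hv w (rfl | rfl | rfl) hadj hcw <;> simp only [Set.mem_insert_iff,
      Set.mem_singleton_iff, not_or] at hv
    · exact absurd (hx v hadj.symm hv.2.1) hcw.symm
    · exact Or.inl (hlow v hadj.symm hv.2.2 hv.1)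
    · exact absurd (ha v hadj.symm hv.2.1) hcw.symm

lemma false_of_flipOn_path (hsep : ∀ c', IsColoring34 H c' → c' x ≠ c' y)
    (hc : IsColoring34 H c) {a b : V} (hyx : y ≠ x) (hyb : y ≠ b) (hya : y ≠ a)
    (hxb : H.Adj b x) (hab : H.Adj a b) (hax : ¬ H.Adj a x) (hbx : c b ≠ c x)
    (hx : ∀ w, H.Adj x w → w ≠ b → c w = c x) (hdega : degN H a ≤ c x + 1)
    (hdegb : degN H b ≤ c x + 1) (hlow : ∀ w, H.Adj b w → w ≠ a → w ≠ x → degN H w ≤ 2) :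
    False := by
  obtain ⟨hca, hsat⟩ := saturated_of_flipOn_pair hsep hc hyx hyb hxb hax hbx hx hdegb hlow
  have ha := forall_adj_eq_of_saturated (S := {b}) hsat (by simpa using ⟨hab, hca ▸ hbx⟩)
    (by rw [Set.ncard_singleton]; omega)
  exact false_of_flipOn_triple hsep hc hyx hyb hya hxb hax hbx hca hx ha hdegb hlow

end Separated

section Configuration

variable {V : Type*} [Finite V] {G : SimpleGraph V} {u1 u2 u6 : V}

lemma exists_isColoring34_deleteVert (hG : MinNonColorable34 G)
    (hN1 : ∀ w, G.Adj u1 w → w = u2 ∨ w = u6) (h26 : u2 ≠ u6) (a12 : G.Adj u1 u2)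
    (hdeg2 : degN G u2 = 5) :
    ∃ c, IsColoring34 (deleteVert G u1) c ∧ c u2 = 3 ∧
      {w | (deleteVert G u1).Adj u2 w ∧ c w = c u2}.ncard = c u2 ∧
      {w | (deleteVert G u1).Adj u6 w ∧ c w = c u6}.ncard = c u6 := by
  obtain ⟨hncol, hdel, -⟩ := hG
  obtain ⟨c, hc⟩ := hdel u1
  have hsat2 := saturated_of_not_colorable34 hncol hc hN1
  refine ⟨c, hc, eq_three_of_saturated (fun c hc => ne_of_not_colorable34 hncol hc hN1) hc
    h26.symm hsat2 ?_, hsat2, saturated_of_not_colorable34 hncol hc fun w hw => (hN1 w hw).symm⟩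
  have := degN_deleteVert_of_adj a12.symm
  omega

lemma not_is5s_or_is6p_third (hG : MinNonColorable34 G) {u3 u4 : V}
    (hN1 : ∀ w, G.Adj u1 w → w = u2 ∨ w = u6) (h26 : u2 ≠ u6) (h13 : u1 ≠ u3) (h36 : u3 ≠ u6)
    (h24 : u2 ≠ u4) (a12 : G.Adj u1 u2) (a23 : G.Adj u2 u3) (a34 : G.Adj u3 u4)
    (h5p : Is5p G u2) (hdeg3 : 3 ≤ degN G u3) (hdeg4 : 3 ≤ degN G u4) :
    ¬ (Is5s G u3 ∨ Is6p G u3) := by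
  obtain ⟨c, hc, hc2, hsat2, -⟩ := exists_isColoring34_deleteVert hG hN1 h26 a12 h5p.1
  set H := deleteVert G u1
  have hsep : ∀ c, IsColoring34 H c → c u2 ≠ c u6 := fun c hc => ne_of_not_colorable34 hG.1 hc hN1
  have h12 := G.ne_of_adj a12
  have hdeg2 : degN H u2 + 1 = 5 := h5p.1 ▸ degN_deleteVert_of_adj a12.symm
  have hlow2 : ∀ w, H.Adj u2 w → w ≠ u3 → degN H w ≤ 2 := fun w hw hw3 =>
    degN_le_two_of_tpn_le (deleteVert_le G u1) (S := {u3})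
      (Set.singleton_subset_iff.mpr ⟨a23, hdeg3⟩) (by simp [h5p.2]) hw hw3
  obtain ⟨hc3, hsat3⟩ := saturated_of_forall_adj_degN_le_two hsep hc h26.symm (z := u3)
    ((ncard_le_degN (G := H) fun _ hw => hw.1).trans (by omega)) hlow2
  have a23' : H.Adj u2 u3 := ⟨a23, h12.symm, h13.symm⟩
  have h2 := forall_adj_eq_of_saturated (S := {u3}) hsat2 (by simpa using ⟨a23', hc3⟩)
    (by rw [Set.ncard_singleton]; omega)
  intro hbad
  obtain ⟨hd3, -⟩ := is5s_of_is5s_or_is6p hbad h24 a23.symm a34 (by rw [h5p.1]; omega) hdeg4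
  have hdeg3' : degN H u3 = 5 := hd3 ▸ degN_deleteVert_of_not_adj h13.symm
    fun h => (hN1 u3 h.symm).elim (G.ne_of_adj a23).symm h36
  have h3 := forall_adj_eq_of_saturated (S := {u2}) hsat3
    (by simpa using ⟨a23'.symm, hc3.symm⟩) (by have := hc.1 u3; rw [Set.ncard_singleton]; omega)
  exact false_of_kempe_edge hsep hc h26.symm h36.symm hc3 h2 h3

lemma not_is5s_or_is6p_last_three (hG : MinNonColorable34 G) (hgirth : GirthAtLeast5 G)
    {u3 u4 u5 : V} (hN1 : ∀ w, G.Adj u1 w → w = u2 ∨ w = u6) (h26 : u2 ≠ u6) (h14 : u1 ≠ u4)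
    (h15 : u1 ≠ u5) (h24 : u2 ≠ u4) (h25 : u2 ≠ u5) (h35 : u3 ≠ u5) (h46 : u4 ≠ u6)
    (a12 : G.Adj u1 u2) (a34 : G.Adj u3 u4) (a45 : G.Adj u4 u5) (a56 : G.Adj u5 u6)
    (a61 : G.Adj u6 u1) (h5p : Is5p G u2) (hdeg3 : 3 ≤ degN G u3) :
    ¬ ((Is5s G u4 ∨ Is6p G u4) ∧ (Is5s G u5 ∨ Is6p G u5) ∧ (Is5s G u6 ∨ Is6p G u6)) := by
  obtain ⟨c, hc, hc2, -, hsat6⟩ := exists_isColoring34_deleteVert hG hN1 h26 a12 h5p.1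
  set H := deleteVert G u1
  have hsep : ∀ c, IsColoring34 H c → c u6 ≠ c u2 :=
    fun c hc => ne_of_not_colorable34 hG.1 hc fun w hw => (hN1 w hw).symm
  have hc6 : c u6 = 4 := (hc.1 u6).resolve_left fun h => hsep c hc (h.trans hc2.symm)
  rintro ⟨b4, b5, b6⟩
  have hdeg6 : 5 ≤ degN G u6 := by rcases b6 with ⟨h, -⟩ | ⟨h, -⟩ <;> omega
  obtain ⟨hd4, -⟩ := is5s_of_is5s_or_is6p b4 h35 a34.symm a45 hdeg3
    (by rcases b5 with ⟨h, -⟩ | ⟨h, -⟩ <;> omega)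
  obtain ⟨hd5, htpn5⟩ := is5s_of_is5s_or_is6p b5 h46 a45.symm a56 (by omega) (by omega)
  have h16 := G.ne_of_adj a61.symm
  have a56' : H.Adj u5 u6 := ⟨a56, h15.symm, h16.symm⟩
  have hdeg6' : degN H u6 + 1 = degN G u6 := degN_deleteVert_of_adj a61
  obtain ⟨hd6, htpn6⟩ : Is6p G u6 := by
    refine b6.resolve_left fun h5s => ?_
    have := eq_three_of_saturated hsep hc h26 hsat6 (by rw [h5s.1] at hdeg6'; omega)
    omega
  have hlow6 : ∀ w, H.Adj u6 w → w ≠ u5 → degN H w ≤ 2 := fun w hw hw5 =>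
    degN_le_two_of_tpn_le (deleteVert_le G u1) (S := {u5})
      (Set.singleton_subset_iff.mpr ⟨a56.symm, by omega⟩) (by simp [htpn6]) hw hw5
  have hcount6 := ncard_adj_add_ncard_adj_le hc u6
  obtain ⟨hc5, -⟩ := saturated_of_forall_adj_degN_le_two hsep hc h26 (z := u5)
    (by omega) hlow6
  have h6 := forall_adj_eq_of_saturated (S := {u5}) hsat6 (by simpa using ⟨a56'.symm, hc5⟩)
    (by rw [Set.ncard_singleton]; omega)
  have hdeg5' : degN H u5 = 5 := hd5 ▸ degN_deleteVert_of_not_adj h15.symm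
    fun h => (hN1 u5 h.symm).elim h25.symm (G.ne_of_adj a56)
  have hlow5 : ∀ w, H.Adj u5 w → w ≠ u4 → w ≠ u6 → degN H w ≤ 2 := fun w hw hw4 hw6 =>
    degN_le_two_of_tpn_le (deleteVert_le G u1) (S := {u4, u6})
      (by rintro w (rfl | rfl); exacts [⟨a45.symm, by omega⟩, ⟨a56, by omega⟩])
      (by rw [Set.ncard_pair h46, htpn5]) hw (by simp [hw4, hw6])
  have hdeg4' : degN H u4 = 5 := hd4 ▸ degN_deleteVert_of_not_adj h14.symm
    fun h => (hN1 u4 h.symm).elim h24.symm h46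
  exact false_of_flipOn_path hsep hc h26 h25 h24 a56' ⟨a45, h14.symm, h15.symm⟩
    (fun h => hgirth.1 u4 u5 u6 a45 a56 h.1.symm) hc5 h6 (by omega) (by omega) hlow5

end Configuration

section Hexagon

variable {V : Type*} [Finite V] {G : SimpleGraph V}

lemma ncard_is5s_or_is6p_le_two_of_normalized (hG : MinNonColorable34 G)
    (hgirth : GirthAtLeast5 G) {g : ZMod 6 → V} (hg : Function.Injective g)
    (hadj : ∀ i, G.Adj (g i) (g (i + 1))) (hdeg0 : degN G (g 0) = 2) (h5p : Is5p G (g 1))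
    (hdeg : ∀ i ≠ 0, 3 ≤ degN G (g i)) :
    {x ∈ Set.range g | Is5s G x ∨ Is6p G x}.ncard ≤ 2 := by
  have hne : ∀ i j, i ≠ j → g i ≠ g j := fun _ _ => hg.ne
  have hN1 : ∀ w, G.Adj (g 0) w → w = g 1 ∨ w = g 5 :=
    fun w => eq_or_eq_of_degN_eq_two hdeg0 (hadj 0) (hadj 5).symm (hne 1 5 (by decide))
  have h3 := not_is5s_or_is6p_third hG hN1 (hne 1 5 (by decide)) (hne 0 2 (by decide))
    (hne 2 5 (by decide)) (hne 1 3 (by decide)) (hadj 0) (hadj 1) (hadj 2) h5p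
    (hdeg 2 (by decide)) (hdeg 3 (by decide))
  have h456 := not_is5s_or_is6p_last_three hG hgirth hN1 (hne 1 5 (by decide))
    (hne 0 3 (by decide)) (hne 0 4 (by decide)) (hne 1 3 (by decide)) (hne 1 4 (by decide))
    (hne 2 4 (by decide)) (hne 3 5 (by decide)) (hadj 0) (hadj 2) (hadj 3) (hadj 4) (hadj 5)
    h5p (hdeg 2 (by decide))
  have hsub : {x ∈ Set.range g | Is5s G x ∨ Is6p G x} ⊆ {g 3, g 4, g 5} := by
    rintro _ ⟨⟨i, rfl⟩, hbad⟩
    obtain rfl | rfl | rfl | rfl | rfl | rfl : i = 0 ∨ i = 1 ∨ i = 2 ∨ i = 3 ∨ i = 4 ∨ i = 5 :=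
      (by decide : ∀ i : ZMod 6, i = 0 ∨ i = 1 ∨ i = 2 ∨ i = 3 ∨ i = 4 ∨ i = 5) i
    · rcases hbad with ⟨h, -⟩ | ⟨h, -⟩ <;> omega
    · rcases hbad with ⟨-, h⟩ | ⟨h, -⟩ <;> have := h5p.1 <;> have := h5p.2 <;> omega
    · exact absurd hbad h3
    all_goals simp
  by_contra! hlt
  have heq := Set.eq_of_subset_of_ncard_le hsub
    (by rw [Set.ncard_eq_three.mpr ⟨_, _, _, hne 3 4 (by decide), hne 3 5 (by decide),
      hne 4 5 (by decide), rfl⟩]; omega) (Set.toFinite _)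
  have hbad : ∀ x ∈ ({g 3, g 4, g 5} : Set V), Is5s G x ∨ Is6p G x := fun x hx => (heq ▸ hx).2
  exact h456 ⟨hbad _ (by simp), hbad _ (by simp), hbad _ (by simp)⟩

lemma ncard_is5s_or_is6p_le_two (hG : MinNonColorable34 G) (hgirth : GirthAtLeast5 G)
    {f : ZMod 6 → V} (hf : Function.Injective f) (hadj : ∀ i, G.Adj (f i) (f (i + 1)))
    (h2 : {x ∈ Set.range f | degN G x = 2}.ncard = 1)
    (h5p : {x ∈ Set.range f | Is5p G x}.ncard = 1) :
    {x ∈ Set.range f | Is5s G x ∨ Is6p G x}.ncard ≤ 2 := by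
  obtain ⟨_, hx⟩ := Set.ncard_eq_one.mp h2
  obtain ⟨⟨a, rfl⟩, hdega⟩ := hx.symm ▸ Set.mem_singleton _
  obtain ⟨_, hy⟩ := Set.ncard_eq_one.mp h5p
  obtain ⟨⟨p, rfl⟩, hp⟩ := hy.symm ▸ Set.mem_singleton _
  have hprev : ∀ i, G.Adj (f i) (f (i - 1)) := fun i => by simpa using (hadj (i - 1)).symm
  have hdeg : ∀ i ≠ a, 3 ≤ degN G (f i) := by
    intro i hia
    have := ncard_le_degN (G := G) (v := f i) (S := {f (i - 1), f (i + 1)})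
      (by rintro w (rfl | rfl); exacts [hprev i, hadj i])
    rw [Set.ncard_pair (hf.ne ((by decide : ∀ i : ZMod 6, i - 1 ≠ i + 1) i))] at this
    by_contra! hlt
    have : f i ∈ {x ∈ Set.range f | degN G x = 2} := ⟨⟨i, rfl⟩, by omega⟩
    rw [hx] at this
    exact hia (hf this)
  have hpa : a = p - 1 ∨ a = p + 1 := by
    by_contra! hpa
    have := ncard_le_tpn (G := G) (v := f p) (S := {f (p - 1), f (p + 1)})
      (by rintro w (rfl | rfl); exacts [⟨hprev p, hdeg _ hpa.1.symm⟩, ⟨hadj p, hdeg _ hpa.2.symm⟩])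
    rw [Set.ncard_pair (hf.ne ((by decide : ∀ i : ZMod 6, i - 1 ≠ i + 1) p)), hp.2] at this
    omega
  -- relabel the hexagon so that the `2`-vertex is `f 0` and the `5p`-vertex is `f 1`
  have hnormalize : ∀ σ : ZMod 6 ≃ ZMod 6, (∀ i, G.Adj (f (σ i)) (f (σ (i + 1)))) → σ 0 = a →
      σ 1 = p → {x ∈ Set.range f | Is5s G x ∨ Is6p G x}.ncard ≤ 2 := by
    intro σ hσ h0 h1
    rw [← σ.surjective.range_comp f]
    exact ncard_is5s_or_is6p_le_two_of_normalized hG hgirth (hf.comp σ.injective) hσ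
      (by simpa [h0]) (by simpa [h1]) fun i hi => hdeg _ (h0 ▸ σ.injective.ne hi)
  rcases hpa with rfl | rfl
  · exact hnormalize (Equiv.addLeft (p - 1)) (fun i => by simpa [add_assoc] using hadj (p - 1 + i))
      (by simp) (by simp)
  · exact hnormalize (Equiv.subLeft (p + 1))
      (fun i => by simpa [sub_add_eq_sub_sub] using hprev (p + 1 - i)) (by simp) (by simp)

end Hexagon

/-- In a minimally non-(3,4)-colorable graph of girth at least 5, if
exactly one vertex of a 6-cycle has degree 2 and exactly one is a 5p-vertex, then
at most two of its vertices are 5s-vertices or 6p-vertices. -/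
theorem stmt_14 {V : Type*} [Fintype V] (G : SimpleGraph V)
    (hG : MinNonColorable34 G) (hgirth : GirthAtLeast5 G)
    (u1 u2 u3 u4 u5 u6 : V)
    (hnd : ([u1, u2, u3, u4, u5, u6] : List V).Nodup)
    (a12 : G.Adj u1 u2) (a23 : G.Adj u2 u3) (a34 : G.Adj u3 u4)
    (a45 : G.Adj u4 u5) (a56 : G.Adj u5 u6) (a61 : G.Adj u6 u1)
    (h2 : {x ∈ ({u1, u2, u3, u4, u5, u6} : Set V) | degN G x = 2}.ncard = 1)
    (h5p : {x ∈ ({u1, u2, u3, u4, u5, u6} : Set V) | Is5p G x}.ncard = 1) :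
    {x ∈ ({u1, u2, u3, u4, u5, u6} : Set V) | Is5s G x ∨ Is6p G x}.ncard ≤ 2 := by
  have hrange : ({u1, u2, u3, u4, u5, u6} : Set V) =
      Set.range (![u1, u2, u3, u4, u5, u6] : ZMod 6 → V) := by
    ext x; simp; tauto
  rw [hrange] at h2 h5p ⊢
  refine ncard_is5s_or_is6p_le_two hG hgirth (List.nodup_ofFn.mp hnd) (fun i => ?_) h2 h5p
  fin_cases i
  exacts [a12, a23, a34, a45, a56, a61]
end
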